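/- Let a ∈ W₁ with ‖a‖_W < ρ and let f(x) = Σ_{i≥0} f_i x^i be analytic on D(ρ). Write f(T(a)) = T(f∘a) + E_{f(a)}. Then ‖E_{f(a)}‖_F ≤ (1/2)‖a'‖_W² g''(‖a‖_W), where g(x) = Σ_{i≥0} |f_i| x^i. -/

import Mathlib

/-- The semi-infinite Toeplitz matrix `T(a) = (a_{j-i})`, 0-based indices. -/
def Toep (a : ℤ → ℂ) : ℕ → ℕ → ℂ := fun i j => a ((j : ℤ) - i)

/-- Hankel matrix `H(a⁺) = (a_{i+j-1})`, 0-based indices. -/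
def HankP (a : ℤ → ℂ) : ℕ → ℕ → ℂ := fun i j => a ((i : ℤ) + j + 1)

/-- Hankel matrix `H(a⁻) = (a_{-i-j+1})`, 0-based indices. -/
def HankM (a : ℤ → ℂ) : ℕ → ℕ → ℂ := fun i j => a (-((i : ℤ) + j + 1))

/-- Product of two semi-infinite matrices. -/
noncomputable def tMul (A B : ℕ → ℕ → ℂ) : ℕ → ℕ → ℂ := fun i j => ∑' k : ℕ, A i k * B k j

/-- Coefficients of the power `a(z)^n` (bilateral convolution power). -/
noncomputable def convPow (a : ℤ → ℂ) : ℕ → ℤ → ℂ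
  | 0 => fun k => if k = 0 then 1 else 0
  | n + 1 => fun k => ∑' i : ℤ, a i * convPow a n (k - i)

/-- Entrywise ℓ¹ norm `‖·‖_F` of a semi-infinite matrix. -/
noncomputable def fNorm (E : ℕ → ℕ → ℂ) : ℝ := ∑' p : ℕ × ℕ, ‖E p.1 p.2‖

/-- Wiener norm `‖a‖_W = ∑|a_i|`. -/
noncomputable def wNorm (a : ℤ → ℂ) : ℝ := ∑' i : ℤ, ‖a i‖

/-- Norm of the derivative: `‖a'‖_W = ∑ |i|·|a_i|`. -/
noncomputable def dNorm (a : ℤ → ℂ) : ℝ := ∑' i : ℤ, |(i : ℝ)| * ‖a i‖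

/-- Power of a semi-infinite matrix. -/
noncomputable def mPow (A : ℕ → ℕ → ℂ) : ℕ → ℕ → ℕ → ℂ
  | 0 => fun i j => if i = j then 1 else 0
  | n + 1 => tMul A (mPow A n)

/-!
Widom's identity `T(ac) = T(a) T(c) + H(a⁻) H(c⁺)` gives the recursion
`E_{n+1} = T(a) E_n - H(a⁻) H((aⁿ)⁺)`. Since `‖T(a) B‖_F ≤ ‖a‖_W ‖B‖_F`,
`‖A B‖_F ≤ ‖A‖_F ‖B‖_F` and `‖H(b^±)‖_F ≤ ‖b'‖_W`, while the Leibniz rule gives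
`‖(aⁿ)'‖_W ≤ n ‖a‖_W^{n-1} ‖a'‖_W`, one gets
`‖E_{n+1}‖_F ≤ ‖a‖_W ‖E_n‖_F + n ‖a‖_W^{n-1} ‖a'‖_W²`, hence
`‖E_n‖_F ≤ (n choose 2) ‖a'‖_W² ‖a‖_W^{n-2}`. Summing against `|f_n|` gives the bound, and the
resulting series converges because `‖a‖_W < ρ`.
-/

open scoped ENNReal

lemma enorm_tsum_mul_le {ι R : Type*} [NormedRing R] (g h : ι → R) :
    ‖∑' i, g i * h i‖ₑ ≤ ∑' i, ‖g i‖ₑ * ‖h i‖ₑ :=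
  (enorm_tsum_le_tsum_enorm (f := fun i => g i * h i)).trans <| ENNReal.tsum_le_tsum fun i => by
    simpa only [enorm_eq_nnnorm, ← ENNReal.coe_mul, ENNReal.coe_le_coe] using
      nnnorm_mul_le (g i) (h i)

lemma summable_mul_of_summable_norm_of_summable_norm {ι R : Type*} [NormedRing R]
    [CompleteSpace R] {x y : ι → R}
    (hx : Summable fun i => ‖x i‖) (hy : Summable fun i => ‖y i‖) :
    Summable fun i => x i * y i :=
  Summable.of_norm_bounded (hx.mul_right (∑' j, ‖y j‖)) fun i =>
    (norm_mul_le _ _).trans <| by gcongr; exact hy.le_tsum i fun j _ => norm_nonneg (y j)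

lemma toReal_le_tsum_of_le_tsum_ofReal {ι : Type*} {x : ℝ≥0∞} {g : ι → ℝ} (hg0 : ∀ i, 0 ≤ g i)
    (hg : Summable g) (h : x ≤ ∑' i, ENNReal.ofReal (g i)) : x.toReal ≤ ∑' i, g i := by
  rw [← ENNReal.ofReal_tsum_of_nonneg hg0 hg] at h
  exact ENNReal.toReal_le_of_le_ofReal (tsum_nonneg hg0) h

noncomputable section

/-- `ℝ≥0∞`-valued versions of `wNorm`, `dNorm` and `fNorm`: sums of these can be rearranged
without summability side conditions, and finiteness is only needed where an identity between
complex series is used. -/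
def wENorm (a : ℤ → ℂ) : ℝ≥0∞ := ∑' i, ‖a i‖ₑ

def dENorm (a : ℤ → ℂ) : ℝ≥0∞ := ∑' i, (i.natAbs : ℝ≥0∞) * ‖a i‖ₑ

def fENorm (A : ℕ → ℕ → ℂ) : ℝ≥0∞ := ∑' p : ℕ × ℕ, ‖A p.1 p.2‖ₑ

lemma wENorm_eq_ofReal {a : ℤ → ℂ} (ha : Summable fun i => ‖a i‖) :
    wENorm a = ENNReal.ofReal (wNorm a) := by
  rw [wNorm, ENNReal.ofReal_tsum_of_nonneg (fun _ => norm_nonneg _) ha]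
  simp [wENorm]

lemma dENorm_eq_ofReal {a : ℤ → ℂ} (ha' : Summable fun i : ℤ => |(i : ℝ)| * ‖a i‖) :
    dENorm a = ENNReal.ofReal (dNorm a) := by
  rw [dNorm, ENNReal.ofReal_tsum_of_nonneg (fun _ => by positivity) ha']
  refine tsum_congr fun i => ?_
  rw [ENNReal.ofReal_mul (abs_nonneg _), ofReal_norm, ← Int.cast_abs, ← Nat.cast_natAbs,
    ENNReal.ofReal_natCast]

lemma fNorm_eq_toReal_fENorm (A : ℕ → ℕ → ℂ) : fNorm A = (fENorm A).toReal := by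
  rw [fENorm, ENNReal.tsum_toReal_eq fun _ => enorm_ne_top]
  simp [fNorm]

def conv (b c : ℤ → ℂ) : ℤ → ℂ := fun k => ∑' i, b i * c (k - i)

lemma convPow_succ (a : ℤ → ℂ) (n : ℕ) : convPow a (n + 1) = conv a (convPow a n) := rfl

lemma tsum_enorm_comp_sub (c : ℤ → ℂ) (i : ℤ) : ∑' k, ‖c (k - i)‖ₑ = wENorm c :=
  (Equiv.subRight i).tsum_eq fun j => ‖c j‖ₑ

lemma tsum_natAbs_mul_enorm_comp_sub (c : ℤ → ℂ) (i : ℤ) :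
    ∑' k, ((k - i).natAbs : ℝ≥0∞) * ‖c (k - i)‖ₑ = dENorm c :=
  (Equiv.subRight i).tsum_eq fun j => (j.natAbs : ℝ≥0∞) * ‖c j‖ₑ

lemma wENorm_conv_le (b c : ℤ → ℂ) : wENorm (conv b c) ≤ wENorm b * wENorm c :=
  calc wENorm (conv b c)
      ≤ ∑' k, ∑' i, ‖b i‖ₑ * ‖c (k - i)‖ₑ := ENNReal.tsum_le_tsum fun k => enorm_tsum_mul_le _ _
    _ = ∑' i, ‖b i‖ₑ * wENorm c := by
        rw [ENNReal.tsum_comm]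
        simp only [ENNReal.tsum_mul_left, tsum_enorm_comp_sub]
    _ = wENorm b * wENorm c := ENNReal.tsum_mul_right

/-- Leibniz rule; it comes from `|k| ≤ |i| + |k - i|`. -/
lemma dENorm_conv_le (b c : ℤ → ℂ) :
    dENorm (conv b c) ≤ dENorm b * wENorm c + wENorm b * dENorm c :=
  calc dENorm (conv b c)
      ≤ ∑' k, ∑' i, ((i.natAbs : ℝ≥0∞) + (k - i).natAbs) * (‖b i‖ₑ * ‖c (k - i)‖ₑ) := by
        refine ENNReal.tsum_le_tsum fun k => ?_
        refine (mul_le_mul_right (enorm_tsum_mul_le _ _) _).trans ?_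
        rw [← ENNReal.tsum_mul_left]
        refine ENNReal.tsum_le_tsum fun i => mul_le_mul_left ?_ _
        exact_mod_cast (Int.natAbs_add_le i (k - i)).trans_eq' (by rw [add_sub_cancel])
    _ = ∑' i, ((i.natAbs : ℝ≥0∞) * ‖b i‖ₑ * wENorm c + ‖b i‖ₑ * dENorm c) := by
        rw [ENNReal.tsum_comm]
        refine tsum_congr fun i => ?_
        rw [← tsum_enorm_comp_sub c i, ← tsum_natAbs_mul_enorm_comp_sub c i,
          ← ENNReal.tsum_mul_left, ← ENNReal.tsum_mul_left, ← ENNReal.tsum_add]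
        exact tsum_congr fun k => by ring
    _ = dENorm b * wENorm c + wENorm b * dENorm c := by
        rw [ENNReal.tsum_add, ENNReal.tsum_mul_right, ENNReal.tsum_mul_right]; rfl

lemma wENorm_convPow_le (a : ℤ → ℂ) (n : ℕ) : wENorm (convPow a n) ≤ wENorm a ^ n := by
  induction n with
  | zero =>
    have h : ∀ k : ℤ, ‖convPow a 0 k‖ₑ = if k = 0 then 1 else 0 := fun k => by
      simp only [convPow]; split_ifs <;> simp
    simp [wENorm, h]
  | succ n ih =>
    calc wENorm (convPow a (n + 1)) ≤ wENorm a * wENorm (convPow a n) := wENorm_conv_le _ _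
      _ ≤ wENorm a ^ (n + 1) := by rw [pow_succ']; gcongr

lemma dENorm_convPow_le (a : ℤ → ℂ) (n : ℕ) :
    dENorm (convPow a n) ≤ n * wENorm a ^ (n - 1) * dENorm a := by
  induction n with
  | zero =>
    have h : ∀ k : ℤ, (k.natAbs : ℝ≥0∞) * ‖convPow a 0 k‖ₑ = 0 := fun k => by
      simp only [convPow]; split_ifs with hk <;> simp [hk]
    simp [dENorm, h]
  | succ n ih =>
    have hpow : (n : ℝ≥0∞) * wENorm a ^ (n - 1) * wENorm a = n * wENorm a ^ n := by
      rcases n with _ | n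
      · simp
      · rw [mul_assoc, ← pow_succ, Nat.add_sub_cancel]
    calc dENorm (convPow a (n + 1))
        ≤ dENorm a * wENorm (convPow a n) + wENorm a * dENorm (convPow a n) :=
          dENorm_conv_le _ _
      _ ≤ dENorm a * wENorm a ^ n + wENorm a * (n * wENorm a ^ (n - 1) * dENorm a) := by
          gcongr
          exact wENorm_convPow_le a n
      _ = dENorm a * wENorm a ^ n + n * wENorm a ^ (n - 1) * wENorm a * dENorm a := by ring
      _ = (n + 1 : ℕ) * wENorm a ^ (n + 1 - 1) * dENorm a := by
          rw [hpow, Nat.add_sub_cancel]; push_cast; ring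

lemma fENorm_sub_le (A B : ℕ → ℕ → ℂ) : fENorm (A - B) ≤ fENorm A + fENorm B := by
  rw [fENorm, fENorm, fENorm, ← ENNReal.tsum_add]
  exact ENNReal.tsum_le_tsum fun p => enorm_sub_le

lemma tsum_enorm_row_le_fENorm (B : ℕ → ℕ → ℂ) (k : ℕ) : ∑' q, ‖B k q‖ₑ ≤ fENorm B :=
  ENNReal.tsum_comp_le_tsum_of_injective (Prod.mk_right_injective k) fun p => ‖B p.1 p.2‖ₑ

lemma tsum_enorm_col_le_fENorm (B : ℕ → ℕ → ℂ) (q : ℕ) : ∑' k, ‖B k q‖ₑ ≤ fENorm B :=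
  ENNReal.tsum_comp_le_tsum_of_injective (Prod.mk_left_injective q) fun p => ‖B p.1 p.2‖ₑ

lemma fENorm_tMul_le_tsum (A B : ℕ → ℕ → ℂ) :
    fENorm (tMul A B) ≤ ∑' k, (∑' p, ‖A p k‖ₑ) * ∑' q, ‖B k q‖ₑ :=
  calc fENorm (tMul A B)
      ≤ ∑' pq : ℕ × ℕ, ∑' k, ‖A pq.1 k‖ₑ * ‖B k pq.2‖ₑ :=
        ENNReal.tsum_le_tsum fun pq => enorm_tsum_mul_le _ _
    _ = ∑' p, ∑' k, ∑' q, ‖A p k‖ₑ * ‖B k q‖ₑ := by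
        rw [ENNReal.tsum_prod']
        exact tsum_congr fun p => ENNReal.tsum_comm
    _ = ∑' k, (∑' p, ‖A p k‖ₑ) * ∑' q, ‖B k q‖ₑ := by
        rw [ENNReal.tsum_comm]
        simp only [ENNReal.tsum_mul_left, ENNReal.tsum_mul_right]

lemma fENorm_tMul_le (A B : ℕ → ℕ → ℂ) : fENorm (tMul A B) ≤ fENorm A * fENorm B :=
  calc fENorm (tMul A B)
      ≤ ∑' k, (∑' p, ‖A p k‖ₑ) * fENorm B :=
        (fENorm_tMul_le_tsum A B).trans <|
          ENNReal.tsum_le_tsum fun k => by gcongr; exact tsum_enorm_row_le_fENorm B k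
    _ = fENorm A * fENorm B := by
        rw [ENNReal.tsum_mul_right]
        congr 1
        rw [fENorm, ENNReal.tsum_prod', ENNReal.tsum_comm]

lemma fENorm_tMul_Toep_le (a : ℤ → ℂ) (B : ℕ → ℕ → ℂ) :
    fENorm (tMul (Toep a) B) ≤ wENorm a * fENorm B :=
  calc fENorm (tMul (Toep a) B)
      ≤ ∑' k, wENorm a * ∑' q, ‖B k q‖ₑ := by
        refine (fENorm_tMul_le_tsum _ B).trans (ENNReal.tsum_le_tsum fun k => ?_)
        gcongr
        exact ENNReal.tsum_comp_le_tsum_of_injective (fun p p' h => by simpa using h)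
          fun j => ‖a j‖ₑ
    _ = wENorm a * fENorm B := by rw [ENNReal.tsum_mul_left, fENorm, ENNReal.tsum_prod']

lemma fENorm_tsum_mul_le (f : ℕ → ℂ) (E : ℕ → ℕ → ℕ → ℂ) :
    fENorm (fun p q => ∑' i, f i * E i p q) ≤ ∑' i, ‖f i‖ₑ * fENorm (E i) :=
  calc fENorm (fun p q => ∑' i, f i * E i p q)
      ≤ ∑' pq : ℕ × ℕ, ∑' i, ‖f i‖ₑ * ‖E i pq.1 pq.2‖ₑ :=
        ENNReal.tsum_le_tsum fun pq => enorm_tsum_mul_le _ _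
    _ = ∑' i, ‖f i‖ₑ * fENorm (E i) := by
        rw [ENNReal.tsum_comm]
        simp only [fENorm, ENNReal.tsum_mul_left]

/-- Each `j ≥ 1` is `p + q + 1` for exactly `j` pairs `(p, q)`. -/
lemma tsum_enorm_add_add_one_le (b : ℤ → ℂ) :
    ∑' p : ℕ × ℕ, ‖b (p.1 + p.2 + 1)‖ₑ ≤ dENorm b :=
  calc ∑' p : ℕ × ℕ, ‖b (p.1 + p.2 + 1)‖ₑ
      = ∑' n : ℕ, (((n + 1 : ℕ) : ℤ).natAbs : ℝ≥0∞) * ‖b ((n + 1 : ℕ) : ℤ)‖ₑ := by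
        rw [← Finset.HasAntidiagonal.sigmaAntidiagonalEquivProd.tsum_eq, ENNReal.tsum_sigma']
        refine tsum_congr fun n => ?_
        refine (Finset.tsum_subtype (Finset.HasAntidiagonal.antidiagonal n)
          fun p : ℕ × ℕ => ‖b (p.1 + p.2 + 1)‖ₑ).trans ?_
        have h : ∀ p ∈ Finset.HasAntidiagonal.antidiagonal n,
            ‖b (p.1 + p.2 + 1)‖ₑ = ‖b (n + 1)‖ₑ := fun p hp => by
          rw [← Finset.HasAntidiagonal.mem_antidiagonal.1 hp]; push_cast; rfl
        rw [Finset.sum_congr rfl h]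
        simp only [Finset.sum_const, Finset.Nat.card_antidiagonal, nsmul_eq_mul]
        norm_cast
    _ ≤ dENorm b := ENNReal.tsum_comp_le_tsum_of_injective
          (fun m n h => by simpa using h) fun j : ℤ => (j.natAbs : ℝ≥0∞) * ‖b j‖ₑ

lemma fENorm_HankP_le (c : ℤ → ℂ) : fENorm (HankP c) ≤ dENorm c :=
  tsum_enorm_add_add_one_le c

lemma fENorm_HankM_le (a : ℤ → ℂ) : fENorm (HankM a) ≤ dENorm a :=
  calc fENorm (HankM a) ≤ dENorm fun j => a (-j) := tsum_enorm_add_add_one_le _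
    _ = dENorm a := by
        show ∑' i : ℤ, (i.natAbs : ℝ≥0∞) * ‖a (-i)‖ₑ = ∑' i : ℤ, (i.natAbs : ℝ≥0∞) * ‖a i‖ₑ
        rw [← (Equiv.neg ℤ).tsum_eq fun j : ℤ => (j.natAbs : ℝ≥0∞) * ‖a j‖ₑ]
        simp

/-- Widom's identity: split the convolution index `k ∈ ℤ` into `k ≥ 0` and `k = -(m + 1)`. -/
lemma Toep_conv {a c : ℤ → ℂ} (ha : Summable fun i => ‖a i‖) (hc : Summable fun i => ‖c i‖)
    (p q : ℕ) :
    Toep (conv a c) p q = tMul (Toep a) (Toep c) p q + tMul (HankM a) (HankP c) p q := by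
  have hshift : Summable fun k : ℤ => ‖a (k - p)‖ :=
    ((Equiv.subRight (p : ℤ)).summable_iff (f := fun j => ‖a j‖)).2 ha
  have hrefl : Summable fun k : ℤ => ‖c (q - k)‖ :=
    ((Equiv.subLeft (q : ℤ)).summable_iff (f := fun j => ‖c j‖)).2 hc
  have hsum : Summable fun k : ℤ => a (k - p) * c (q - k) :=
    summable_mul_of_summable_norm_of_summable_norm hshift hrefl
  calc Toep (conv a c) p q = ∑' k : ℤ, a (k - p) * c (q - k) := by
        rw [Toep, conv, ← (Equiv.subRight (p : ℤ)).tsum_eq]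
        exact tsum_congr fun k => by simp only [Equiv.subRight_apply]; ring_nf
    _ = ∑' k : ℕ, a (k - p) * c (q - k) + ∑' m : ℕ, a (-(m + 1) - p) * c (q - -(m + 1)) :=
        tsum_of_nat_of_neg_add_one (hsum.comp_injective Nat.cast_injective)
          (hsum.comp_injective fun m m' h => by simpa using h)
    _ = tMul (Toep a) (Toep c) p q + tMul (HankM a) (HankP c) p q := by
        simp only [tMul, Toep, HankM, HankP]
        congr 1
        exact tsum_congr fun m => by ring_nf

lemma tMul_add_apply {A B C : ℕ → ℕ → ℂ} {p q : ℕ} (hB : Summable fun k => A p k * B k q)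
    (hC : Summable fun k => A p k * C k q) :
    tMul A (B + C) p q = tMul A B p q + tMul A C p q := by
  simp only [tMul, Pi.add_apply, mul_add]
  exact hB.tsum_add hC

/-- The correction `E_n` of the paper, `T(a)^n = T(a^n) + E_n`. -/
def powCorrection (a : ℤ → ℂ) (n : ℕ) : ℕ → ℕ → ℂ := mPow (Toep a) n - Toep (convPow a n)

lemma powCorrection_zero (a : ℤ → ℂ) : powCorrection a 0 = 0 := by
  funext p q
  by_cases h : p = q
  · simp [powCorrection, mPow, Toep, convPow, h]
  · simp [powCorrection, mPow, Toep, convPow, h, sub_eq_zero, Ne.symm h]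

lemma powCorrection_succ {a : ℤ → ℂ} (ha : Summable fun i => ‖a i‖) {n : ℕ}
    (hc : Summable fun i => ‖convPow a n i‖)
    (hE : ∀ q, Summable fun k => ‖powCorrection a n k q‖) :
    powCorrection a (n + 1) =
      tMul (Toep a) (powCorrection a n) - tMul (HankM a) (HankP (convPow a n)) := by
  funext p q
  have hrow : Summable fun k : ℕ => ‖Toep a p k‖ :=
    ha.comp_injective fun k k' h => by simpa [Toep] using h
  have hmPow : mPow (Toep a) n = Toep (convPow a n) + powCorrection a n := by
    rw [powCorrection, add_sub_cancel]
  have hToep : Summable fun k : ℕ => ‖Toep (convPow a n) k q‖ :=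
    hc.comp_injective fun k k' h => by simpa using h
  have hsplit : tMul (Toep a) (mPow (Toep a) n) p q =
      tMul (Toep a) (Toep (convPow a n)) p q + tMul (Toep a) (powCorrection a n) p q := by
    rw [hmPow]
    exact tMul_add_apply (summable_mul_of_summable_norm_of_summable_norm hrow hToep)
      (summable_mul_of_summable_norm_of_summable_norm hrow (hE q))
  change tMul (Toep a) (mPow (Toep a) n) p q - Toep (conv a (convPow a n)) p q = _
  rw [hsplit, Toep_conv ha hc]
  simp only [Pi.sub_apply]
  ring

lemma fENorm_powCorrection_succ_le {a : ℤ → ℂ} (ha : Summable fun i => ‖a i‖) {n : ℕ}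
    (hc : Summable fun i => ‖convPow a n i‖) (hE : fENorm (powCorrection a n) ≠ ⊤) :
    fENorm (powCorrection a (n + 1)) ≤
      wENorm a * fENorm (powCorrection a n) + dENorm a * dENorm (convPow a n) := by
  have hcol (q : ℕ) : Summable fun k => ‖powCorrection a n k q‖ :=
    tsum_enorm_ne_top_iff_summable_norm.1 <|
      ne_top_of_le_ne_top hE (tsum_enorm_col_le_fENorm _ q)
  rw [powCorrection_succ ha hc hcol]
  refine (fENorm_sub_le _ _).trans (add_le_add (fENorm_tMul_Toep_le _ _) ?_)
  exact (fENorm_tMul_le _ _).trans (mul_le_mul' (fENorm_HankM_le a) (fENorm_HankP_le _))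

theorem fENorm_powCorrection_le {a : ℤ → ℂ} (hw : wENorm a ≠ ⊤) (hd : dENorm a ≠ ⊤) (n : ℕ) :
    fENorm (powCorrection a n) ≤ n.choose 2 * dENorm a ^ 2 * wENorm a ^ (n - 2) := by
  have ha : Summable fun i => ‖a i‖ := tsum_enorm_ne_top_iff_summable_norm.1 hw
  induction n with
  | zero => simp [powCorrection_zero, fENorm]
  | succ n ih =>
    have hc : Summable fun i => ‖convPow a n i‖ := tsum_enorm_ne_top_iff_summable_norm.1 <|
      ne_top_of_le_ne_top (ENNReal.pow_ne_top hw) (wENorm_convPow_le a n)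
    have hE : fENorm (powCorrection a n) ≠ ⊤ := ne_top_of_le_ne_top (by finiteness) ih
    have hpow : (n.choose 2 : ℝ≥0∞) * wENorm a ^ (n - 2) * wENorm a =
        n.choose 2 * wENorm a ^ (n - 1) := by
      rcases lt_or_ge n 2 with hn | hn
      · simp [Nat.choose_eq_zero_of_lt hn]
      · rw [mul_assoc, ← pow_succ, show n - 2 + 1 = n - 1 by omega]
    calc fENorm (powCorrection a (n + 1))
        ≤ wENorm a * fENorm (powCorrection a n) + dENorm a * dENorm (convPow a n) :=
          fENorm_powCorrection_succ_le ha hc hE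
      _ ≤ wENorm a * (n.choose 2 * dENorm a ^ 2 * wENorm a ^ (n - 2)) +
            dENorm a * (n * wENorm a ^ (n - 1) * dENorm a) := by
          gcongr
          exact dENorm_convPow_le a n
      _ = (n.choose 2 * wENorm a ^ (n - 2) * wENorm a + n * wENorm a ^ (n - 1)) *
            dENorm a ^ 2 := by ring
      _ = (n + 1).choose 2 * dENorm a ^ 2 * wENorm a ^ (n + 1 - 2) := by
          rw [hpow, Nat.choose_succ_succ', Nat.choose_one_right, show n + 1 - 2 = n - 1 by omega]
          push_cast
          ring

lemma fENorm_powCorrection_le_ofReal {a : ℤ → ℂ} (ha : Summable fun i => ‖a i‖)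
    (ha' : Summable fun i : ℤ => |(i : ℝ)| * ‖a i‖) (n : ℕ) :
    fENorm (powCorrection a n) ≤
      ENNReal.ofReal (n.choose 2 * dNorm a ^ 2 * wNorm a ^ (n - 2)) := by
  have hw0 : 0 ≤ wNorm a := tsum_nonneg fun _ => norm_nonneg _
  have hd0 : 0 ≤ dNorm a := tsum_nonneg fun _ => by positivity
  rw [ENNReal.ofReal_mul (by positivity), ENNReal.ofReal_mul (by positivity),
    ENNReal.ofReal_natCast, ENNReal.ofReal_pow hd0, ENNReal.ofReal_pow hw0,
    ← wENorm_eq_ofReal ha, ← dENorm_eq_ofReal ha']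
  refine fENorm_powCorrection_le ?_ ?_ n
  · rw [wENorm_eq_ofReal ha]; exact ENNReal.ofReal_ne_top
  · rw [dENorm_eq_ofReal ha']; exact ENNReal.ofReal_ne_top

/-- Comparison with `∑ (j + 2 choose 2) (w / r)^j` for some `w < r < ρ`. -/
lemma summable_choose_two_mul_norm_mul_pow {𝕜 : Type*} [RCLike 𝕜] {f : ℕ → 𝕜} {w ρ : ℝ}
    (hw : 0 ≤ w) (hwρ : w < ρ) (hf : ∀ x : 𝕜, ‖x‖ < ρ → Summable fun i => f i * x ^ i) :
    Summable fun i : ℕ => (i.choose 2 : ℝ) * ‖f i‖ * w ^ (i - 2) := by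
  obtain ⟨r, hwr, hrρ⟩ := exists_between hwρ
  have hr : 0 < r := hw.trans_lt hwr
  obtain ⟨M, hM⟩ : BddAbove (Set.range fun i => ‖f i‖ * r ^ i) := by
    have hrρ' : ‖(r : 𝕜)‖ < ρ := by rwa [RCLike.norm_ofReal, abs_of_pos hr]
    simpa [abs_of_pos hr] using (hf r hrρ').tendsto_atTop_zero.norm.bddAbove_range
  have ht : ‖w / r‖ < 1 := by
    rw [Real.norm_of_nonneg (div_nonneg hw hr.le)]
    exact (div_lt_one hr).2 hwr
  rw [← summable_nat_add_iff 2]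
  refine Summable.of_nonneg_of_le (fun i => by positivity) (fun i => ?_)
    ((summable_choose_mul_geometric_of_norm_lt_one 2 ht).mul_left (M / r ^ 2))
  have hfi : ‖f (i + 2)‖ * r ^ (i + 2) ≤ M := hM ⟨i + 2, rfl⟩
  calc ((i + 2).choose 2 : ℝ) * ‖f (i + 2)‖ * w ^ (i + 2 - 2)
      = (i + 2).choose 2 * w ^ i / r ^ (i + 2) * (‖f (i + 2)‖ * r ^ (i + 2)) := by
        rw [Nat.add_sub_cancel]; field_simp
    _ ≤ (i + 2).choose 2 * w ^ i / r ^ (i + 2) * M := by gcongr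
    _ = M / r ^ 2 * ((i + 2).choose 2 * (w / r) ^ i) := by rw [div_pow, pow_add]; field_simp

end

/-- Let `a ∈ W₁` with `‖a‖_W < ρ` and `f(x) = Σ f_i x^i` analytic on `D(ρ)`.
Writing `T(a)^i = T(a^i) + E_i` and `f(T(a)) = T(f∘a) + E_{f(a)}` with
`E_{f(a)} = Σ_i f_i E_i`, one has
`‖E_{f(a)}‖_F ≤ (1/2) ‖a'‖_W² g''(‖a‖_W)` where `g(x) = Σ |f_i| x^i`. -/
theorem correction_bound_function (a : ℤ → ℂ)
    (ha : Summable fun i : ℤ => ‖a i‖)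
    (ha' : Summable fun i : ℤ => |(i : ℝ)| * ‖a i‖)
    (ρ : ℝ) (hρ : wNorm a < ρ)
    (f : ℕ → ℂ)
    (hf : ∀ x : ℂ, ‖x‖ < ρ → Summable fun i : ℕ => f i * x ^ i)
    (E : ℕ → ℕ → ℕ → ℂ)
    (hE : ∀ i : ℕ, ∀ p q : ℕ,
      mPow (Toep a) i p q = Toep (convPow a i) p q + E i p q) :
    fNorm (fun p q => ∑' i : ℕ, f i * E i p q) ≤
      1 / 2 * dNorm a ^ 2 *
        ∑' i : ℕ, (i * (i - 1) : ℝ) * ‖f i‖ * wNorm a ^ (i - 2) := by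
  obtain rfl : E = powCorrection a := by
    funext i p q
    rw [powCorrection, Pi.sub_apply, Pi.sub_apply, hE]
    ring
  have hw0 : 0 ≤ wNorm a := tsum_nonneg fun _ => norm_nonneg _
  set g : ℕ → ℝ := fun i => ‖f i‖ * (i.choose 2 * dNorm a ^ 2 * wNorm a ^ (i - 2))
  have hg : Summable g := ((summable_choose_two_mul_norm_mul_pow hw0 hρ hf).mul_left
    (dNorm a ^ 2)).congr fun i => by ring
  calc fNorm (fun p q => ∑' i, f i * powCorrection a i p q)
      = (fENorm fun p q => ∑' i, f i * powCorrection a i p q).toReal := fNorm_eq_toReal_fENorm _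
    _ ≤ ∑' i, g i := by
        refine toReal_le_tsum_of_le_tsum_ofReal (fun i => by positivity) hg <|
          (fENorm_tsum_mul_le f _).trans (ENNReal.tsum_le_tsum fun i => ?_)
        rw [ENNReal.ofReal_mul (norm_nonneg _), ofReal_norm]
        gcongr
        exact fENorm_powCorrection_le_ofReal ha ha' i
    _ = 1 / 2 * dNorm a ^ 2 * ∑' i : ℕ, (i * (i - 1) : ℝ) * ‖f i‖ * wNorm a ^ (i - 2) := by
        rw [← tsum_mul_left]
        exact tsum_congr fun i => by simp only [g, Nat.cast_choose_two]; ring
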